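/- arXiv:1908.01181 — 2 statements merged into one kernel-verified Lean document; each statement's English description precedes it below -/
import Mathlib

section
/- Let X be a nonempty set, let p ≥ 1, and let f_1,…,f_p : X → ℝ satisfy f_j(x) > 0 for all x ∈ X and all j. Let 0 < LB(j) ≤ f_j(x) ≤ UB(j) hold for all x ∈ X and all j, let ε > 0 and 0 < τ < ε/p, and set ε'' := (ε − τ·p)/((1+τ)·p) and u_j := ⌊log_{1+ε''}(UB(j)/LB(j))⌋ for each j. Suppose that for every w ∈ ℝ^p with w_j > 0 for all j there is a solution sol(w) ∈ X with ∑_{j=1}^p w_j·f_j(sol(w)) ≤ (1+τ)·∑_{j=1}^p w_j·f_j(x) for all x ∈ X. Let W be the set of all weight vectors w with w_j = 1/(LB(j)·(1+ε'')^{i_j}) where i_j ∈ {0,…,u_j} for all j and i_k = 0 for at least one k, and let P := {sol(w) : w ∈ W}. Then for every x' ∈ X there exists x ∈ P such that, setting α_j := max{1, f_j(x)/f_j(x')}, the sum of α_j over all indices j with α_j > 1 is at most p + ε and α_i ≤ 1 + τ for at least one index i. -/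
/-!
Round each `f j x'` down to the geometric grid `LB j * (1 + ε'') ^ n` and shift all exponents
by their minimum: this gives a weight `w ∈ W` under which every `w j * f j x'` lies between a
common value `m` and `m * (1 + ε'')`. Dividing the `(1 + τ)`-approximate weighted-sum
inequality for `sol w` by `m` bounds `∑ j, f j (sol w) / f j x'` by
`(1 + τ) * p * (1 + ε'') = p + ε`. And `sol w` cannot exceed `x'` by a factor above `1 + τ` in
every objective, since its weighted sum would then exceed `(1 + τ)` times that of `x'`.
-/

theorem Int.natCast_le_floor_logb_of_pow_le {b y : ℝ} (hb : 1 < b) {n : ℕ} (h : b ^ n ≤ y) :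
    (n : ℤ) ≤ ⌊Real.logb b y⌋ := by
  have hy : 0 < y := (pow_pos (zero_lt_one.trans hb) n).trans_le h
  rw [Int.le_floor, Int.cast_natCast, Real.le_logb_iff_rpow_le hb hy, Real.rpow_natCast]
  exact h

theorem exists_mul_pow_le_lt_mul_pow_succ {b L y : ℝ} (hb : 1 < b) (hL : 0 < L) (hLy : L ≤ y) :
    ∃ n : ℕ, L * b ^ n ≤ y ∧ y < L * b ^ (n + 1) := by
  obtain ⟨n, hle, hlt⟩ := exists_nat_pow_near ((one_le_div hL).mpr hLy) hb
  exact ⟨n, by rwa [le_div_iff₀' hL] at hle, by rwa [div_lt_iff₀' hL] at hlt⟩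

section

open Finset

variable {ι : Type*}

theorem exists_grid_exponents [Finite ι] [Nonempty ι] {b : ℝ} (hb : 1 < b)
    {L y U : ι → ℝ} (hL : ∀ j, 0 < L j) (hLy : ∀ j, L j ≤ y j) (hyU : ∀ j, y j ≤ U j) :
    ∃ i : ι → ℕ, (∀ j, (i j : ℤ) ≤ ⌊Real.logb b (U j / L j)⌋) ∧ (∃ k, i k = 0) ∧
      ∃ m > 0, ∀ j, m ≤ 1 / (L j * b ^ i j) * y j ∧ 1 / (L j * b ^ i j) * y j ≤ m * b := by
  have hb0 : 0 < b := zero_lt_one.trans hb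
  choose n hlow hhigh using fun j => exists_mul_pow_le_lt_mul_pow_succ hb (hL j) (hLy j)
  obtain ⟨k, hk⟩ := Finite.exists_min n
  have hshift : ∀ j, 1 / (L j * b ^ (n j - n k)) * y j = b ^ n k * (y j / (L j * b ^ n j)) := by
    intro j
    rw [pow_sub₀ b hb0.ne' (hk j)]
    field_simp
  refine ⟨fun j => n j - n k, fun j => ?_, ⟨k, Nat.sub_self _⟩, b ^ n k, pow_pos hb0 _,
    fun j => ?_⟩
  · refine Int.natCast_le_floor_logb_of_pow_le hb ?_
    rw [le_div_iff₀' (hL j)]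
    calc L j * b ^ (n j - n k) ≤ L j * b ^ n j :=
          mul_le_mul_of_nonneg_left (pow_le_pow_right₀ hb.le (Nat.sub_le _ _)) (hL j).le
      _ ≤ U j := (hlow j).trans (hyU j)
  · have hLb : 0 < L j * b ^ n j := mul_pos (hL j) (pow_pos hb0 _)
    rw [hshift]
    constructor
    · exact le_mul_of_one_le_right (pow_pos hb0 _).le ((one_le_div hLb).mpr (hlow j))
    · refine mul_le_mul_of_nonneg_left ?_ (pow_pos hb0 _).le
      rw [div_le_iff₀ hLb]
      calc y j ≤ L j * b ^ (n j + 1) := (hhigh j).le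
        _ = b * (L j * b ^ n j) := by ring

theorem exists_le_mul_of_weighted_sum_le [Fintype ι] [Nonempty ι]
    {w a c : ι → ℝ} {σ : ℝ} (hw : ∀ j, 0 < w j)
    (h : ∑ j, w j * c j ≤ σ * ∑ j, w j * a j) : ∃ j, c j ≤ σ * a j := by
  by_contra! hlt
  have : σ * ∑ j, w j * a j < ∑ j, w j * c j := by
    rw [mul_sum]
    refine sum_lt_sum_of_nonempty univ_nonempty fun j _ => ?_
    rw [mul_left_comm]
    exact mul_lt_mul_of_pos_left (hlt j) (hw j)
  linarith

theorem sum_filter_one_lt_max_one_le_sum (s : Finset ι) {r : ι → ℝ}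
    (hr : ∀ j, 0 ≤ r j) :
    ∑ j ∈ s.filter (fun j => 1 < max 1 (r j)), max 1 (r j) ≤ ∑ j ∈ s, r j := by
  calc ∑ j ∈ s.filter (fun j => 1 < max 1 (r j)), max 1 (r j)
      = ∑ j ∈ s.filter (fun j => 1 < max 1 (r j)), r j := by
        refine sum_congr rfl fun j hj => max_eq_right ?_
        exact (lt_max_iff.mp (mem_filter.mp hj).2).resolve_left (lt_irrefl 1) |>.le
    _ ≤ ∑ j ∈ s, r j := sum_le_sum_of_subset_of_nonneg (filter_subset _ _) fun j _ _ => hr j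

theorem sum_div_le_of_weighted_sum_le [Fintype ι] {w a c : ι → ℝ} {σ m b : ℝ}
    (ha : ∀ j, 0 < a j) (hc : ∀ j, 0 ≤ c j) (hσ : 0 ≤ σ) (hm : 0 < m)
    (hlow : ∀ j, m ≤ w j * a j) (hhigh : ∀ j, w j * a j ≤ m * b)
    (h : ∑ j, w j * c j ≤ σ * ∑ j, w j * a j) :
    ∑ j, c j / a j ≤ σ * Fintype.card ι * b := by
  have hratio : ∀ j, c j / a j ≤ w j * c j / m := by
    intro j
    rw [div_le_div_iff₀ (ha j) hm]
    nlinarith [hlow j, hc j]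
  calc ∑ j, c j / a j ≤ ∑ j, w j * c j / m := sum_le_sum fun j _ => hratio j
    _ = (∑ j, w j * c j) / m := (sum_div _ _ _).symm
    _ ≤ σ * (Fintype.card ι * (m * b)) / m := by
        gcongr
        refine h.trans (mul_le_mul_of_nonneg_left ?_ hσ)
        simpa using sum_le_sum fun j (_ : j ∈ univ) => hhigh j
    _ = σ * Fintype.card ι * b := by field_simp

end

open Finset in
theorem multi_factor_approx_min_ptas_ws_general
    {X : Type*} (p : ℕ) (hp : 1 ≤ p)
    (f : Fin p → X → ℝ) (hf : ∀ j x, 0 < f j x)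
    (LB UB : Fin p → ℝ) (hLB : ∀ j, 0 < LB j)
    (hlo : ∀ x j, LB j ≤ f j x) (hhi : ∀ x j, f j x ≤ UB j)
    (ε τ : ℝ) (hτ : 0 < τ) (hτε : τ < ε / p)
    (ε'' : ℝ) (hε'' : ε'' = (ε - τ * p) / ((1 + τ) * p))
    (u : Fin p → ℕ) (hu : ∀ j, (u j : ℤ) = ⌊Real.logb (1 + ε'') (UB j / LB j)⌋)
    (sol : (Fin p → ℝ) → X)
    (hsol : ∀ w : Fin p → ℝ, (∀ j, 0 < w j) →
      ∀ x : X, ∑ j, w j * f j (sol w) ≤ (1 + τ) * ∑ j, w j * f j x)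
    (W : Set (Fin p → ℝ))
    (hW : W = {w | ∃ i : Fin p → ℕ, (∀ j, i j ≤ u j) ∧ (∃ k, i k = 0) ∧
      ∀ j, w j = 1 / (LB j * (1 + ε'') ^ (i j))}) :
    ∀ x' : X, ∃ w ∈ W,
      (∑ j ∈ univ.filter (fun j => 1 < max 1 (f j (sol w) / f j x')),
          max 1 (f j (sol w) / f j x')) ≤ p + ε ∧
      ∃ i : Fin p, max 1 (f i (sol w) / f i x') ≤ 1 + τ := by
  intro x'
  have : Nonempty (Fin p) := ⟨⟨0, hp⟩⟩
  have hp0 : (0 : ℝ) < p := by exact_mod_cast hp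
  have hgap : 0 < ε - τ * p := by linarith [(lt_div_iff₀ hp0).mp hτε]
  have hb : 1 < 1 + ε'' := by
    have : 0 < ε'' := by rw [hε'']; positivity
    linarith
  obtain ⟨i, hiu, hk, m, hm, hbounds⟩ := exists_grid_exponents hb hLB (hlo x') (hhi x')
  set w : Fin p → ℝ := fun j => 1 / (LB j * (1 + ε'') ^ i j)
  have hw : ∀ j, 0 < w j := fun j => by have := hLB j; positivity
  have happrox := hsol w hw x'
  refine ⟨w, hW ▸ ⟨i, fun j => by exact_mod_cast (hiu j).trans (hu j).ge, hk, fun j => rfl⟩,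
    ?_, ?_⟩
  · calc _ ≤ ∑ j, f j (sol w) / f j x' :=
          sum_filter_one_lt_max_one_le_sum _ fun j => (div_pos (hf j _) (hf j x')).le
      _ ≤ (1 + τ) * p * (1 + ε'') := by
          simpa using sum_div_le_of_weighted_sum_le (hf · x') (fun j => (hf j _).le)
            (by linarith) hm (fun j => (hbounds j).1) (fun j => (hbounds j).2) happrox
      _ = p + ε := by rw [hε'']; field_simp; ring
  · obtain ⟨j, hj⟩ := exists_le_mul_of_weighted_sum_le hw happrox
    exact ⟨j, max_le (by linarith) ((div_le_iff₀ (hf j x')).mpr hj)⟩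

open Finset in
/-- Corollary 3.5: if the weighted sum problem admits a polynomial-time
(1+τ)-approximation, then for any ε > 0 and 0 < τ < ε/p, Algorithm 1 (run with
ε − τ·p and σ = 1 + τ, i.e., grid parameter ε'' = (ε − τ·p)/((1+τ)·p)) yields a
multi-factor A-approximation where every feasible solution x' is approximated
by some sol(w), w ∈ W, with factors α_j = max{1, f_j(sol w)/f_j(x')} satisfying
∑_{j : α_j > 1} α_j ≤ p + ε and α_i ≤ 1 + τ for at least one i. -/
theorem multi_factor_approx_min_ptas_ws
    {X : Type*} [Nonempty X] (p : ℕ) (hp : 1 ≤ p)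
    (f : Fin p → X → ℝ) (hf : ∀ j x, 0 < f j x)
    (LB UB : Fin p → ℝ) (hLB : ∀ j, 0 < LB j)
    (hlo : ∀ x j, LB j ≤ f j x) (hhi : ∀ x j, f j x ≤ UB j)
    (ε τ : ℝ) (hε : 0 < ε) (hτ : 0 < τ) (hτε : τ < ε / p)
    (ε'' : ℝ) (hε'' : ε'' = (ε - τ * p) / ((1 + τ) * p))
    (u : Fin p → ℕ) (hu : ∀ j, (u j : ℤ) = ⌊Real.logb (1 + ε'') (UB j / LB j)⌋)
    (sol : (Fin p → ℝ) → X)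
    (hsol : ∀ w : Fin p → ℝ, (∀ j, 0 < w j) →
      ∀ x : X, ∑ j, w j * f j (sol w) ≤ (1 + τ) * ∑ j, w j * f j x)
    (W : Set (Fin p → ℝ))
    (hW : W = {w | ∃ i : Fin p → ℕ, (∀ j, i j ≤ u j) ∧ (∃ k, i k = 0) ∧
      ∀ j, w j = 1 / (LB j * (1 + ε'') ^ (i j))}) :
    ∀ x' : X, ∃ w ∈ W,
      (∑ j ∈ univ.filter (fun j => 1 < max 1 (f j (sol w) / f j x')),
          max 1 (f j (sol w) / f j x')) ≤ p + ε ∧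
      ∃ i : Fin p, max 1 (f i (sol w) / f i x') ≤ 1 + τ :=
  multi_factor_approx_min_ptas_ws_general p hp f hf LB UB hLB hlo hhi ε τ hτ hτε ε'' hε'' u hu sol
    hsol W hW
end

section
/- For every integer p ≥ 2 and every real B ≥ 1, there exists a finite nonempty set Y ⊂ ℝ^p with y_j > 0 for all y ∈ Y and all j, and a point ỹ ∈ Y, such that: (a) ỹ is not supported for maximization, i.e., for every w ∈ ℝ^p with w_j > 0 for all j there exists y' ∈ Y with ∑_{j=1}^p w_j·y'_j > ∑_{j=1}^p w_j·ỹ_j; and (b) for every y ∈ Y that is supported for maximization (i.e., there exists w ∈ ℝ^p with w_j > 0 for all j and ∑_{j=1}^p w_j·y_j ≥ ∑_{j=1}^p w_j·y'_j for all y' ∈ Y), there are at least p − 1 indices j ∈ {1,…,p} with ỹ_j > B·y_j. -/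
/-!
The all-ones point `1` is dominated in weighted sum by the spike point that puts a huge value
`a > p` on a coordinate of maximal weight and a tiny `ε > 0` elsewhere, so `1` is unsupported.
Conversely every supported point is such a spike, and with `B * ε < 1` the point `1` beats it
by more than the factor `B` on the `p - 1` coordinates off the spike.
-/

open Finset

variable {ι : Type*}

def IsSupported [Fintype ι] (Y : Set (ι → ℝ)) (y : ι → ℝ) : Prop :=
  ∃ w : ι → ℝ, (∀ j, 0 < w j) ∧ ∀ y' ∈ Y, ∑ j, w j * y' j ≤ ∑ j, w j * y j

section Spike

variable [DecidableEq ι] {a ε : ℝ}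

def spike (a ε : ℝ) (i : ι) : ι → ℝ := fun j => if j = i then a else ε

theorem spike_pos (ha : 0 < a) (hε : 0 < ε) (i j : ι) : 0 < spike a ε i j := by
  unfold spike
  split_ifs <;> assumption

variable [Fintype ι]

theorem sum_lt_sum_mul_spike {w : ι → ℝ} (hw : ∀ j, 0 < w j) {i : ι}
    (hi : ∀ j, w j ≤ w i) (ha : Fintype.card ι < a) (hε : 0 ≤ ε) :
    ∑ j, w j < ∑ j, w j * spike a ε i j :=
  calc ∑ j, w j ≤ Fintype.card ι * w i := by
        simpa using sum_le_card_nsmul univ w (w i) fun j _ => hi j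
    _ < w i * spike a ε i i := by
        rw [spike, if_pos rfl, mul_comm]
        exact mul_lt_mul_of_pos_left ha (hw i)
    _ ≤ ∑ j, w j * spike a ε i j := by
        refine single_le_sum (f := fun j => w j * spike a ε i j) (fun j _ => ?_) (mem_univ i)
        unfold spike
        split_ifs <;> nlinarith [hw j]

theorem not_isSupported_one [Nonempty ι] {Y : Set (ι → ℝ)} (hY : ∀ i, spike a ε i ∈ Y)
    (ha : Fintype.card ι < a) (hε : 0 ≤ ε) : ¬ IsSupported Y 1 := by
  rintro ⟨w, hw, hsup⟩
  obtain ⟨i, hi⟩ := Finite.exists_max w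
  have hlt := sum_lt_sum_mul_spike hw hi ha hε
  simp only [Pi.one_apply, mul_one] at hsup
  exact (hsup _ (hY i)).not_gt hlt

theorem card_sub_one_le_card_mul_spike_lt_one {B : ℝ} (hB : B * ε < 1) (i : ι) :
    Fintype.card ι - 1 ≤ #{j | B * spike a ε i j < 1} := by
  rw [← card_univ, ← card_erase_of_mem (mem_univ i)]
  refine card_le_card fun j hj => ?_
  rw [mem_filter, spike, if_neg (ne_of_mem_erase hj)]
  exact ⟨mem_univ j, hB⟩

end Spike

open Finset in
/-- Theorem 5.1 (inapproximability for maximization): for every p ≥ 2 and every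
bound B ≥ 1 there is an instance of a p-objective maximization problem (a
finite set Y of positive points) containing an unsupported point ỹ that is not
approximated within factor B in at least p − 1 objectives by any supported
point. -/
theorem supported_not_approx_max
    (p : ℕ) (hp : 2 ≤ p) (B : ℝ) (hB : 1 ≤ B) :
    ∃ (Y : Set (Fin p → ℝ)) (ytil : Fin p → ℝ),
      Y.Finite ∧ Y.Nonempty ∧ (∀ y ∈ Y, ∀ j, 0 < y j) ∧ ytil ∈ Y ∧
      (∀ w : Fin p → ℝ, (∀ j, 0 < w j) →
        ∃ y' ∈ Y, ∑ j, w j * ytil j < ∑ j, w j * y' j) ∧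
      ∀ y ∈ Y,
        (∃ w : Fin p → ℝ, (∀ j, 0 < w j) ∧
          ∀ y' ∈ Y, ∑ j, w j * y' j ≤ ∑ j, w j * y j) →
        p - 1 ≤ (univ.filter (fun j => B * y j < ytil j)).card := by
  have : Nonempty (Fin p) := ⟨⟨0, by omega⟩⟩
  have hB0 : 0 < B := by linarith
  set ε := (2 * B)⁻¹
  have hε : 0 < ε := by positivity
  have hBε : B * ε < 1 := by rw [mul_inv_lt_iff₀ (by positivity)]; linarith
  let Y : Set (Fin p → ℝ) := insert 1 (Set.range (spike ((p : ℝ) + 1) ε))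
  have hunsupp : ¬ IsSupported Y 1 :=
    not_isSupported_one (fun i => Set.mem_insert_of_mem _ ⟨i, rfl⟩) (by simp) hε.le
  refine ⟨Y, 1, (Set.finite_range _).insert 1, Set.insert_nonempty _ _, ?_, Set.mem_insert _ _,
    by simpa [IsSupported] using hunsupp, ?_⟩
  · rintro y (rfl | ⟨i, rfl⟩) j
    exacts [one_pos, spike_pos (by positivity) hε i j]
  · rintro y (rfl | ⟨i, rfl⟩) hsupp
    · exact absurd hsupp hunsupp
    · simpa using card_sub_one_le_card_mul_spike_lt_one hBε i
end
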